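/- arXiv:2605.30648 — 2 statements merged into one kernel-verified Lean document; each statement's English description precedes it below -/
import Mathlib

section
/- Let f : ℝᴰ → ℝ be twice differentiable and nonnegative, and suppose for all θ the (p→q) operator norm of the Hessian satisfies ‖∇²f(θ)‖_{p→q} ≤ H₀ + H₁·f(θ), where H₀, H₁ ≥ 0 and 1/p + 1/q = 1. Then for all θ, ‖∇f(θ)‖_q ≤ √(2·H₀·f(θ) + H₁·f(θ)²). -/
open scoped BigOperators

noncomputable def lpNorm (p : ENNReal) {ι : Type*} [Fintype ι] (x : ι → ℝ) : ℝ :=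
  ‖(WithLp.equiv p (ι → ℝ)).symm x‖

noncomputable def opNorm (p q : ENNReal) {ι κ : Type*} [Fintype ι] [Fintype κ]
    (A : Matrix ι κ ℝ) : ℝ :=
  sSup {c | ∃ x : κ → ℝ, lpNorm p x ≤ 1 ∧ c = lpNorm q (A.mulVec x)}

noncomputable def dotCLM {n : ℕ} (v : Fin n → ℝ) : (Fin n → ℝ) →L[ℝ] ℝ :=
  LinearMap.toContinuousLinearMap (∑ i, v i • (LinearMap.proj i : (Fin n → ℝ) →ₗ[ℝ] ℝ))

noncomputable def mulVecCLM {m n : ℕ} (M : Matrix (Fin m) (Fin n) ℝ) :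
    (Fin n → ℝ) →L[ℝ] (Fin m → ℝ) :=
  LinearMap.toContinuousLinearMap M.mulVecLin

/-!
Fix `θ` and a vector `u` with `‖u‖_p ≤ 1` and `⟪∇f(θ), u⟫ = ‖∇f(θ)‖_q` (the equality case of
Hölder's inequality). Along the line `t ↦ θ - t u` the function `φ t = f (θ - t u)` is
nonnegative, its slope `v = φ'` starts at `-‖∇f(θ)‖_q`, and `v' = ⟪∇²f u, u⟫ ≤ H₀ + H₁ φ`.
The energy `v² - 2 H₀ φ - H₁ φ²`, constant along solutions of `φ'' = H₀ + H₁ φ`, does not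
decrease while `v ≤ 0`. If it were positive at `0`, then `v` would stay below a negative
constant for all `t ≥ 0`, and `φ` would eventually become negative.
-/

open ENNReal Set

section LpNorm

variable {ι κ : Type*} [Fintype ι] [Fintype κ]

lemma lpNorm_neg {p : ℝ≥0∞} [Fact (1 ≤ p)] (x : ι → ℝ) : lpNorm p (-x) = lpNorm p x := by
  simp [lpNorm]

lemma lpNorm_nonneg {p : ℝ≥0∞} [Fact (1 ≤ p)] (x : ι → ℝ) : 0 ≤ lpNorm p x :=
  norm_nonneg _

lemma lpNorm_eq_rpow_sum {p : ℝ≥0∞} (hp : 0 < p.toReal) (x : ι → ℝ) :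
    lpNorm p x = (∑ i, |x i| ^ p.toReal) ^ (1 / p.toReal) := by
  simp [lpNorm, PiLp.norm_eq_sum hp]

lemma lpNorm_top (x : ι → ℝ) : lpNorm ∞ x = ⨆ i, |x i| := by
  simp [lpNorm, PiLp.norm_eq_ciSup]

lemma lpNorm_one (x : ι → ℝ) : lpNorm 1 x = ∑ i, |x i| := by
  simp [lpNorm_eq_rpow_sum (p := 1) (by simp)]

lemma sum_mul_le_lpNorm_mul_lpNorm (p q : ℝ≥0∞) [p.HolderConjugate q] (v u : ι → ℝ) :
    ∑ i, v i * u i ≤ lpNorm q v * lpNorm p u := by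
  have : Fact (1 ≤ p) := ⟨HolderConjugate.one_le p q⟩
  have : Fact (1 ≤ q) := ⟨HolderConjugate.one_le q p⟩
  let B : ι → ℝ →L[ℝ] ℝ →L[ℝ] ℝ := fun _ => ContinuousLinearMap.mul ℝ ℝ
  have hB : ∀ i, ‖B i‖ ≤ (1 : NNReal) := fun _ => by simp [B]
  let e := (lpPiLpₗᵢ (fun _ : ι => ℝ) ℝ (p := q)).symm ((WithLp.equiv q _).symm v)
  let f := (lpPiLpₗᵢ (fun _ : ι => ℝ) ℝ (p := p)).symm ((WithLp.equiv p _).symm u)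
  calc ∑ i, v i * u i = lp.dualPairing q p B hB e f := by
        simp [lp.dualPairing_apply, tsum_fintype, B, e, f, coe_lpPiLpₗᵢ_symm]
    _ ≤ ‖lp.dualPairing q p B hB‖ * ‖e‖ * ‖f‖ :=
        (le_abs_self _).trans ((lp.dualPairing q p B hB).le_opNorm₂ e f)
    _ ≤ 1 * ‖e‖ * ‖f‖ := by gcongr; exact lp.norm_dualPairing B hB
    _ = lpNorm q v * lpNorm p u := by simp [e, f, lpNorm]

lemma lpNorm_mulVec_le_opNorm {p q : ℝ≥0∞} [Fact (1 ≤ p)] [Fact (1 ≤ q)] (A : Matrix ι κ ℝ)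
    {x : κ → ℝ} (hx : lpNorm p x ≤ 1) : lpNorm q (A.mulVec x) ≤ opNorm p q A := by
  let T : WithLp p (κ → ℝ) →L[ℝ] WithLp q (ι → ℝ) := LinearMap.toContinuousLinearMap
    ((WithLp.linearEquiv q ℝ (ι → ℝ)).symm.toLinearMap ∘ₗ A.mulVecLin ∘ₗ
      (WithLp.linearEquiv p ℝ (κ → ℝ)).toLinearMap)
  refine le_csSup ⟨‖T‖, ?_⟩ ⟨x, hx, rfl⟩
  rintro _ ⟨y, hy, rfl⟩
  calc lpNorm q (A.mulVec y) = ‖T ((WithLp.equiv p _).symm y)‖ := rfl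
    _ ≤ ‖T‖ * lpNorm p y := T.le_opNorm _
    _ ≤ ‖T‖ := mul_le_of_le_one_right (norm_nonneg T) hy

lemma abs_sign_le_one {α : Type*} [Ring α] [LinearOrder α] [IsStrictOrderedRing α] (x : α) :
    |(SignType.sign x : α)| ≤ 1 := by
  rcases lt_trichotomy x 0 with hx | hx | hx <;> simp [hx]

lemma lpNorm_rpow_eq_sum {p : ℝ≥0∞} (hp : 0 < p.toReal) (x : ι → ℝ) :
    lpNorm p x ^ p.toReal = ∑ i, |x i| ^ p.toReal := by
  rw [lpNorm_eq_rpow_sum hp, ← Real.rpow_mul (by positivity), one_div_mul_cancel hp.ne',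
    Real.rpow_one]

lemma exists_lpNorm_one_le_one_sum_mul_eq_lpNorm_top (v : ι → ℝ) :
    ∃ u : ι → ℝ, lpNorm 1 u ≤ 1 ∧ ∑ i, v i * u i = lpNorm ∞ v := by
  classical
  cases isEmpty_or_nonempty ι
  · exact ⟨0, by simp [lpNorm_one], by simp [lpNorm_top]⟩
  obtain ⟨j, hj⟩ := exists_eq_ciSup_of_finite (f := fun i => |v i|)
  refine ⟨Pi.single j (SignType.sign (v j) : ℝ), ?_, ?_⟩
  · simpa [lpNorm_one, Pi.single_apply, apply_ite] using abs_sign_le_one (v j)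
  · simp [lpNorm_top, Pi.single_apply, self_mul_sign, hj]

lemma exists_lpNorm_le_one_sum_mul_eq_lpNorm_of_ne_top (p q : ℝ≥0∞) [p.HolderConjugate q]
    (hq : q ≠ ∞) (v : ι → ℝ) : ∃ u : ι → ℝ, lpNorm p u ≤ 1 ∧ ∑ i, v i * u i = lpNorm q v := by
  have : Fact (1 ≤ p) := ⟨HolderConjugate.one_le p q⟩
  have : Fact (1 ≤ q) := ⟨HolderConjugate.one_le q p⟩
  set N := lpNorm q v
  have hq1 : 1 ≤ q.toReal := by
    simpa using ENNReal.toReal_mono hq (HolderConjugate.one_le q p)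
  rcases (lpNorm_nonneg (p := q) v).eq_or_lt with hN | hN
  · exact ⟨0, by simp [lpNorm], by simp [N, ← hN]⟩
  -- the equality case of Hölder's inequality
  let w i := |v i| / N
  have hw0 i : 0 ≤ w i := div_nonneg (abs_nonneg _) hN.le
  have hw : ∑ i, w i ^ q.toReal = 1 := by
    simp only [w, Real.div_rpow (abs_nonneg _) hN.le, ← Finset.sum_div,
      ← lpNorm_rpow_eq_sum (by linarith), N]
    exact div_self (Real.rpow_pos_of_pos hN _).ne'
  refine ⟨fun i => SignType.sign (v i) * w i ^ (q.toReal - 1), ?_, ?_⟩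
  · have hu : ∀ i, |SignType.sign (v i) * w i ^ (q.toReal - 1)| ≤ w i ^ (q.toReal - 1) := by
      intro i
      rw [abs_mul, abs_of_nonneg (Real.rpow_nonneg (hw0 i) _)]
      exact mul_le_of_le_one_left (by positivity) (abs_sign_le_one _)
    by_cases hp : p = ∞
    · have hq_one : q.toReal = 1 := by simp [(HolderConjugate.eq_top_iff_eq_one p q).1 hp]
      subst hp
      rw [lpNorm_top]
      exact Real.iSup_le (fun i => (hu i).trans_eq (by simp [hq_one])) zero_le_one
    · have hpq := HolderConjugate.toReal_of_ne_top hp hq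
      have hp0 : 0 < p.toReal := hpq.pos
      rw [← Real.rpow_le_rpow_iff (lpNorm_nonneg _) zero_le_one hp0,
        Real.one_rpow, lpNorm_rpow_eq_sum hp0]
      refine (Finset.sum_le_sum fun i _ => ?_).trans hw.le
      calc _ ≤ (w i ^ (q.toReal - 1)) ^ p.toReal := Real.rpow_le_rpow (abs_nonneg _) (hu i) hp0.le
        _ = w i ^ q.toReal := by rw [← Real.rpow_mul (hw0 i), hpq.symm.sub_one_mul_conj]
  · calc ∑ i, v i * (SignType.sign (v i) * w i ^ (q.toReal - 1))
        = ∑ i, N * w i ^ q.toReal := by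
          refine Finset.sum_congr rfl fun i _ => ?_
          have hvw : |v i| = N * w i := (mul_div_cancel₀ _ hN.ne').symm
          rw [← mul_assoc, self_mul_sign, hvw, mul_assoc,
            ← Real.rpow_one_add' (hw0 i) (by linarith), add_sub_cancel]
      _ = N := by rw [← Finset.mul_sum, hw, mul_one]

lemma exists_lpNorm_le_one_sum_mul_eq_lpNorm (p q : ℝ≥0∞) [p.HolderConjugate q] (v : ι → ℝ) :
    ∃ u : ι → ℝ, lpNorm p u ≤ 1 ∧ ∑ i, v i * u i = lpNorm q v := by
  by_cases hq : q = ∞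
  · obtain rfl : p = 1 := (HolderConjugate.eq_top_iff_eq_one q p).1 hq
    exact hq ▸ exists_lpNorm_one_le_one_sum_mul_eq_lpNorm_top v
  · exact exists_lpNorm_le_one_sum_mul_eq_lpNorm_of_ne_top p q hq v

end LpNorm

lemma dotCLM_apply {n : ℕ} (v w : Fin n → ℝ) : dotCLM v w = ∑ i, v i * w i := by
  simp [dotCLM]

lemma dotCLM_comm {n : ℕ} (v w : Fin n → ℝ) : dotCLM v w = dotCLM w v := by
  simp only [dotCLM_apply, mul_comm]

lemma mulVecCLM_apply {m n : ℕ} (M : Matrix (Fin m) (Fin n) ℝ) (w : Fin n → ℝ) :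
    mulVecCLM M w = M.mulVec w := by
  simp [mulVecCLM]

lemma dotCLM_mulVecCLM_le_opNorm {n : ℕ} {p q : ℝ≥0∞} [p.HolderConjugate q]
    (A : Matrix (Fin n) (Fin n) ℝ) {w : Fin n → ℝ} (hw : lpNorm p w ≤ 1) :
    dotCLM w (mulVecCLM A w) ≤ opNorm p q A := by
  have : Fact (1 ≤ p) := ⟨HolderConjugate.one_le p q⟩
  have : Fact (1 ≤ q) := ⟨HolderConjugate.one_le q p⟩
  calc dotCLM w (mulVecCLM A w) ≤ lpNorm q (A.mulVec w) * lpNorm p w := by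
        rw [dotCLM_comm, dotCLM_apply, mulVecCLM_apply]
        exact sum_mul_le_lpNorm_mul_lpNorm p q _ _
    _ ≤ opNorm p q A :=
        (mul_le_of_le_one_right (lpNorm_nonneg _) hw).trans (lpNorm_mulVec_le_opNorm A hw)

noncomputable def energy (H0 H1 : ℝ) (φ v : ℝ → ℝ) (t : ℝ) : ℝ :=
  v t ^ 2 - (2 * H0 * φ t + H1 * φ t ^ 2)

section Energy

variable {φ v a : ℝ → ℝ} {H0 H1 : ℝ}

lemma hasDerivAt_energy {t : ℝ} (hφ : HasDerivAt φ (v t) t) (hv : HasDerivAt v (a t) t) :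
    HasDerivAt (energy H0 H1 φ v) (2 * v t * (a t - (H0 + H1 * φ t))) t := by
  convert! (hv.pow 2).sub ((hφ.const_mul (2 * H0)).add ((hφ.pow 2).const_mul H1)) using 1
  simp only [Nat.cast_ofNat]
  ring

lemma energy_le_sq (hH0 : 0 ≤ H0) (hH1 : 0 ≤ H1) {t : ℝ} (hφt : 0 ≤ φ t) :
    energy H0 H1 φ v t ≤ v t ^ 2 := by
  unfold energy
  nlinarith [mul_nonneg hH0 hφt, mul_nonneg hH1 (sq_nonneg (φ t))]

variable (hφ : ∀ t, HasDerivAt φ (v t) t) (hv : ∀ t, HasDerivAt v (a t) t)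
  (ha : ∀ t, a t ≤ H0 + H1 * φ t) (hH0 : 0 ≤ H0) (hH1 : 0 ≤ H1) (hφ_nonneg : ∀ t, 0 ≤ φ t)
include hφ hv ha hH0 hH1 hφ_nonneg

lemma energy_le_and_nonpos (hv0 : v 0 ≤ 0) (hE0 : 0 < energy H0 H1 φ v 0) {t : ℝ} (ht : 0 ≤ t) :
    energy H0 H1 φ v 0 ≤ energy H0 H1 φ v t ∧ v t ≤ 0 := by
  have hE : ∀ t, HasDerivAt (energy H0 H1 φ v) _ t := fun t => hasDerivAt_energy (hφ t) (hv t)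
  have hv_cont : Continuous v := continuous_iff_continuousAt.2 fun t => (hv t).continuousAt
  have hE_cont : Continuous (energy H0 H1 φ v) :=
    continuous_iff_continuousAt.2 fun t => (hE t).continuousAt
  let s := {t | energy H0 H1 φ v 0 ≤ energy H0 H1 φ v t ∧ v t ≤ 0}
  have hs : IsClosed s :=
    (isClosed_le continuous_const hE_cont).inter (isClosed_le hv_cont continuous_const)
  -- Real induction: at a point of `s` the energy is positive, so `v < 0` there and nearby,
  -- and on that neighbourhood the energy is nondecreasing.
  refine (hs.inter isClosed_Icc).Icc_subset_of_forall_mem_nhdsWithin ⟨le_rfl, hv0⟩ ?_ ⟨ht, le_rfl⟩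
  rintro x ⟨⟨hEx, hvx⟩, -⟩
  have hvx_neg : v x < 0 := by
    refine hvx.lt_of_ne fun h => ?_
    have := energy_le_sq (v := v) hH0 hH1 (hφ_nonneg x)
    rw [h] at this
    linarith
  obtain ⟨u, hxu, hu⟩ := exists_Ico_subset_of_mem_nhds
    (hv_cont.continuousAt.preimage_mem_nhds (Iio_mem_nhds hvx_neg)) ⟨x + 1, lt_add_one x⟩
  have hmono : MonotoneOn (energy H0 H1 φ v) (Ico x u) := by
    refine monotoneOn_of_hasDerivWithinAt_nonneg (convex_Ico x u) hE_cont.continuousOn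
      (fun t _ => (hE t).hasDerivWithinAt) fun t ht => ?_
    rw [interior_Ico] at ht
    have hvt : v t < 0 := hu (Ioo_subset_Ico_self ht)
    nlinarith [ha t]
  filter_upwards [Ioo_mem_nhdsGT hxu] with t ht
  exact ⟨hEx.trans (hmono ⟨le_rfl, hxu⟩ (Ioo_subset_Ico_self ht) ht.1.le),
    (hu (Ioo_subset_Ico_self ht)).le⟩

lemma neg_sqrt_le_slope_of_nonneg : -√(2 * H0 * φ 0 + H1 * φ 0 ^ 2) ≤ v 0 := by
  by_contra! hfast
  set ε := energy H0 H1 φ v 0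
  have hε : 0 < ε := by
    have h := (Real.sqrt_lt' (by linarith [Real.sqrt_nonneg (2 * H0 * φ 0 + H1 * φ 0 ^ 2)])).1
      (lt_neg.1 hfast)
    simp only [ε, energy]
    nlinarith
  have hslope : ∀ t ∈ Ici (0 : ℝ), v t ≤ -√ε := fun t ht => by
    obtain ⟨hEt, hvt⟩ := energy_le_and_nonpos hφ hv ha hH0 hH1 hφ_nonneg
      (by linarith [Real.sqrt_nonneg (2 * H0 * φ 0 + H1 * φ 0 ^ 2)]) hε ht
    have := energy_le_sq (v := v) hH0 hH1 (hφ_nonneg t)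
    rw [le_neg, Real.sqrt_le_iff]
    exact ⟨neg_nonneg.2 hvt, by rw [neg_sq]; linarith⟩
  have hanti : AntitoneOn (fun t => φ t + √ε * t) (Ici 0) := by
    refine antitoneOn_of_hasDerivWithinAt_nonpos (convex_Ici 0)
      (fun t _ => ((hφ t).add ((hasDerivAt_id t).const_mul √ε)).continuousAt.continuousWithinAt)
      (fun t _ => ((hφ t).add ((hasDerivAt_id t).const_mul √ε)).hasDerivWithinAt) fun t ht => ?_
    rw [interior_Ici] at ht
    linarith [hslope t (mem_Ici.2 ht.le)]
  have hT : 0 ≤ (φ 0 + 1) / √ε := div_nonneg (by linarith [hφ_nonneg 0]) (Real.sqrt_nonneg ε)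
  have := hanti (mem_Ici.2 le_rfl) hT hT
  simp only [mul_zero, add_zero, mul_div_cancel₀ _ (Real.sqrt_pos.2 hε).ne'] at this
  linarith [hφ_nonneg ((φ 0 + 1) / √ε)]

end Energy

theorem stmt1_general {D : ℕ} (p q : ENNReal) (hpq : 1/p + 1/q = 1)
    (f : (Fin D → ℝ) → ℝ) (g : (Fin D → ℝ) → (Fin D → ℝ))
    (Hess : (Fin D → ℝ) → Matrix (Fin D) (Fin D) ℝ)
    (hfnn : ∀ θ, 0 ≤ f θ)
    (hgrad : ∀ θ, HasFDerivAt f (dotCLM (g θ)) θ)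
    (hhess : ∀ θ, HasFDerivAt g (mulVecCLM (Hess θ)) θ)
    (H0 H1 : ℝ) (hH0 : 0 ≤ H0) (hH1 : 0 ≤ H1)
    (hnus : ∀ θ, opNorm p q (Hess θ) ≤ H0 + H1 * f θ) :
    ∀ θ, lpNorm q (g θ) ≤ Real.sqrt (2 * H0 * f θ + H1 * (f θ) ^ 2) := by
  have : p.HolderConjugate q := ENNReal.holderConjugate_iff.2 (by simpa [one_div] using hpq)
  have : Fact (1 ≤ p) := ⟨HolderConjugate.one_le p q⟩
  intro θ
  obtain ⟨u, hu, hgu⟩ := exists_lpNorm_le_one_sum_mul_eq_lpNorm p q (g θ)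
  have hline (t : ℝ) : HasDerivAt (fun t : ℝ => θ + t • -u) (-u) t := by
    simpa using ((hasDerivAt_id t).smul_const (-u)).const_add θ
  have key := neg_sqrt_le_slope_of_nonneg (φ := fun t => f (θ + t • -u))
    (v := fun t => dotCLM (-u) (g (θ + t • -u)))
    (fun t => dotCLM_comm (g _) (-u) ▸ (hgrad _).comp_hasDerivAt t (hline t))
    (fun t => ((dotCLM (-u)).hasFDerivAt.comp _ (hhess _)).comp_hasDerivAt t (hline t))
    (fun t => (dotCLM_mulVecCLM_le_opNorm _ ((lpNorm_neg u).trans_le hu)).trans (hnus _))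
    hH0 hH1 (fun t => hfnn _)
  simpa [dotCLM_apply, mul_comm (u _), hgu] using key

theorem stmt1 {D : ℕ} (p q : ENNReal) (hp : 1 ≤ p) (hq : 1 ≤ q) (hpq : 1/p + 1/q = 1)
    (f : (Fin D → ℝ) → ℝ) (g : (Fin D → ℝ) → (Fin D → ℝ))
    (Hess : (Fin D → ℝ) → Matrix (Fin D) (Fin D) ℝ)
    (hfnn : ∀ θ, 0 ≤ f θ)
    (hgrad : ∀ θ, HasFDerivAt f (dotCLM (g θ)) θ)
    (hhess : ∀ θ, HasFDerivAt g (mulVecCLM (Hess θ)) θ)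
    (H0 H1 : ℝ) (hH0 : 0 ≤ H0) (hH1 : 0 ≤ H1)
    (hnus : ∀ θ, opNorm p q (Hess θ) ≤ H0 + H1 * f θ) :
    ∀ θ, lpNorm q (g θ) ≤ Real.sqrt (2 * H0 * f θ + H1 * (f θ) ^ 2) :=
  stmt1_general p q hpq f g Hess hfnn hgrad hhess H0 H1 hH0 hH1 hnus
end

section
/- For the K-armed bandit softmax policy gradient objective f(θ) = r(a*) − ⟨π_θ, r⟩ (with π_θ the softmax of θ, r ∈ [0,1]^K, a* the optimal arm), for every q ≥ 1 and every θ it holds that ‖∇f(θ)‖_q ≥ π_θ(a*)·f(θ). -/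
open scoped BigOperators

/-! Differentiating the softmax along the coordinate direction `a*` gives
`∂f/∂θ(a*) = -π_θ(a*) · (r(a*) - ⟨π_θ, r⟩) = -π_θ(a*) · f(θ)`, and a single coordinate of a
vector is bounded by each of its `ℓ^q` norms, `q ≥ 1`. -/

open Finset

lemma abs_apply_le_lpNorm {ι : Type*} [Fintype ι] {q : ENNReal} (hq : 1 ≤ q) (x : ι → ℝ)
    (i : ι) : |x i| ≤ lpNorm q x :=
  haveI := Fact.mk hq
  PiLp.norm_apply_le ((WithLp.equiv q (ι → ℝ)).symm x) i

lemma dotCLM_single {n : ℕ} (v : Fin n → ℝ) (i : Fin n) : dotCLM v (Pi.single i 1) = v i := by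
  simp [dotCLM, Pi.single_apply]

section Softmax

variable {ι : Type*} [Fintype ι]

noncomputable def softmax (θ : ι → ℝ) (a : ι) : ℝ := Real.exp (θ a) / ∑ b, Real.exp (θ b)

lemma sum_softmax_mul (θ r : ι → ℝ) :
    ∑ a, softmax θ a * r a = (∑ a, Real.exp (θ a) * r a) / ∑ a, Real.exp (θ a) := by
  simp only [softmax, sum_div, div_mul_eq_mul_div]

variable [DecidableEq ι]

lemma hasLineDerivAt_sum_exp_mul (w θ : ι → ℝ) (i : ι) :
    HasLineDerivAt ℝ (fun θ : ι → ℝ ↦ ∑ a, Real.exp (θ a) * w a) (Real.exp (θ i) * w i) θ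
      (Pi.single i 1) := by
  have hF : HasFDerivAt (fun θ : ι → ℝ ↦ ∑ a, Real.exp (θ a) * w a)
      (∑ a, (Real.exp (θ a) * w a) •
        ContinuousLinearMap.proj (R := ℝ) (φ := fun _ : ι ↦ ℝ) a) θ := by
    refine HasFDerivAt.fun_sum fun a _ ↦ ?_
    simpa [smul_smul, mul_comm] using
      ((hasFDerivAt_apply (𝕜 := ℝ) a θ).exp).mul_const (w a)
  simpa [Pi.single_apply] using hF.hasLineDerivAt (Pi.single i 1)

lemma hasLineDerivAt_sum_softmax_mul [Nonempty ι] (r θ : ι → ℝ) (i : ι) :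
    HasLineDerivAt ℝ (fun θ ↦ ∑ a, softmax θ a * r a)
      (softmax θ i * (r i - ∑ a, softmax θ a * r a)) θ (Pi.single i 1) := by
  have hS : ∑ a, Real.exp (θ a) ≠ 0 := (sum_pos (fun a _ ↦ Real.exp_pos (θ a)) univ_nonempty).ne'
  have hnum := hasLineDerivAt_sum_exp_mul r θ i
  have hden := hasLineDerivAt_sum_exp_mul 1 θ i
  simp only [Pi.one_apply, mul_one] at hden
  simp only [sum_softmax_mul]
  refine (hnum.div hden (by simpa using hS)).congr_deriv ?_
  simp only [softmax, zero_smul, add_zero]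
  field_simp

end Softmax

theorem stmt13_general {K : ℕ} (r : Fin K → ℝ)
    (astar : Fin K)
    (π : (Fin K → ℝ) → Fin K → ℝ)
    (hπ : ∀ θ a, π θ a = Real.exp (θ a) / ∑ a', Real.exp (θ a'))
    (f : (Fin K → ℝ) → ℝ) (hf : ∀ θ, f θ = r astar - ∑ a, π θ a * r a)
    (g : (Fin K → ℝ) → (Fin K → ℝ))
    (hgrad : ∀ θ, HasFDerivAt f (dotCLM (g θ)) θ) :
    ∀ q : ENNReal, 1 ≤ q → ∀ θ, π θ astar * f θ ≤ lpNorm q (g θ) := by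
  intro q hq θ
  have : Nonempty (Fin K) := ⟨astar⟩
  have hπ_eq : π = softmax := funext fun θ ↦ funext (hπ θ)
  have hf_eq : f = fun θ ↦ r astar - ∑ a, softmax θ a * r a := funext fun θ ↦ by rw [hf, hπ_eq]
  have hg : g θ astar = -(π θ astar * f θ) := by
    have hfderiv := (hgrad θ).hasLineDerivAt (Pi.single astar 1)
    have hformula := (hasLineDerivAt_sum_softmax_mul r θ astar).const_sub (r astar)
    rw [dotCLM_single, hf_eq] at hfderiv
    rw [hfderiv.unique hformula, hf_eq, hπ_eq]
  calc π θ astar * f θ ≤ |g θ astar| := by rw [hg, abs_neg]; exact le_abs_self _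
    _ ≤ lpNorm q (g θ) := abs_apply_le_lpNorm hq (g θ) astar

/-- Softmax policy gradient bandit objective: ‖∇f(θ)‖_q ≥ π_θ(a*) f(θ) for all q ≥ 1. -/
theorem stmt13 {K : ℕ} (hK : 0 < K) (r : Fin K → ℝ) (hr : ∀ a, r a ∈ Set.Icc (0:ℝ) 1)
    (astar : Fin K) (hastar : ∀ a, r a ≤ r astar)
    (π : (Fin K → ℝ) → Fin K → ℝ)
    (hπ : ∀ θ a, π θ a = Real.exp (θ a) / ∑ a', Real.exp (θ a'))
    (f : (Fin K → ℝ) → ℝ) (hf : ∀ θ, f θ = r astar - ∑ a, π θ a * r a)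
    (g : (Fin K → ℝ) → (Fin K → ℝ))
    (hgrad : ∀ θ, HasFDerivAt f (dotCLM (g θ)) θ) :
    ∀ q : ENNReal, 1 ≤ q → ∀ θ, π θ astar * f θ ≤ lpNorm q (g θ) :=
  stmt13_general r astar π hπ f hf g hgrad
end
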